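/- Let u_1, …, u_n be positive integers, set T = 3·(u_1 + … + u_n), and let t and k be integers with 0 < t ≤ u_1 + … + u_n and 1 ≤ k ≤ n. Let E be the PB instance with 6k+1 voters and projects C = {x_1,…,x_n} ∪ {y_1,…,y_{2k+1}} ∪ {d_1,…,d_{k+1}} ∪ {p}, costs cost(x_i) = T + u_i, cost(y_j) = T, cost(d_j) = T − t + 1, cost(p) = T − t, where each x_i is approved by exactly 6k voters, each y_j by exactly 4k voters, each d_j by exactly 2k voters, and p by no voter; the budget is B = (k+1)T, and GreedyAV is run with cheaper-first tie-breaking (with an arbitrary fixed residual order). Then there exists a set F of at most k approval flips with p ∈ GreedyAV(E_F) if and only if there exists S ⊆ {1,…,n} with |S| = k and Σ_{i∈S} u_i = t. -/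

import Mathlib

/-!
At most `k` flips change the scores of two distinct projects by at most `k < 2k` in total, so the
score gaps of `2k` between the classes survive and GreedyAV considers all `x_i`, then the `y_j`,
then the `d_j`, then `p`. Every `x_i` costs more than `T = 3·Σ u_i`, and the `k` first ones fill
the budget `(k + 1)T` up to `T - σ`, where `σ` is the sum of their `u_i`; hence no `y_j` fits.
If `σ < t`, exactly one `d_j` fits and leaves no room for `p`; otherwise no `d_j` fits and `p`,
of cost `T - t`, fits exactly when `σ = t`. Conversely, giving each `x_i` with `i ∈ S` one more
approval puts exactly these projects first.
-/

structure PB (C V : Type) [Fintype C] [DecidableEq C] [Fintype V] [DecidableEq V] where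
  A : V → Finset C
  budget : ℕ
  cost : C → ℕ

namespace PB

variable {C V : Type} [Fintype C] [DecidableEq C] [Fintype V] [DecidableEq V]

/-- The approval score of a project: the number of voters approving it. -/
def score (E : PB C V) (c : C) : ℕ :=
  (Finset.univ.filter fun v => c ∈ E.A v).card

/-- Perform the approval flips in `F`: voter `v`'s approval set becomes
`A v ∆ {c : (v, c) ∈ F}`. -/
def flip (E : PB C V) (F : Finset (V × C)) : PB C V :=
  { E with A := fun v => symmDiff (E.A v) ((F.filter fun q => q.1 = v).image Prod.snd) }

/-- Greedily process the given list of projects: starting from `W = ∅`,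
add the currently considered project whenever it fits in the budget. -/
def greedyFold (budget : ℕ) (cost : C → ℕ) (order : List C) : Finset C :=
  order.foldl (fun W c => if (∑ x ∈ W, cost x) + cost c ≤ budget then insert c W else W) ∅

/-- The order in which GreedyAV considers the projects: non-increasing approval
score, ties broken in favor of `prec`-earlier projects. -/
noncomputable def consOrderAV (E : PB C V) (prec : C → C → Bool) : List C :=
  (Finset.univ : Finset C).toList.mergeSort fun c c' =>
    decide (E.score c' < E.score c) ||
      (decide (E.score c = E.score c') && (prec c c' || decide (c = c')))

/-- GreedyAV with tie-breaking given by the strict relation `prec`. -/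
noncomputable def greedyAV (E : PB C V) (prec : C → C → Bool) : Finset C :=
  greedyFold E.budget E.cost (consOrderAV E prec)

/-- The order in which GreedyCost considers the projects: non-increasing
approval-score-to-cost ratio (compared by cross-multiplication), ties broken in
favor of `prec`-earlier projects. -/
noncomputable def consOrderCost (E : PB C V) (prec : C → C → Bool) : List C :=
  (Finset.univ : Finset C).toList.mergeSort fun c c' =>
    decide (E.score c' * E.cost c < E.score c * E.cost c') ||
      (decide (E.score c * E.cost c' = E.score c' * E.cost c) && (prec c c' || decide (c = c')))

/-- GreedyCost with tie-breaking given by the strict relation `prec`. -/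
noncomputable def greedyCost (E : PB C V) (prec : C → C → Bool) : Finset C :=
  greedyFold E.budget E.cost (consOrderCost E prec)

/-- Cheaper-first tie-breaking: ties in approval score are broken in favor of
the cheaper project, with remaining ties broken by the residual order `prec0`. -/
def cheaperFirst (cost : C → ℕ) (prec0 : C → C → Bool) : C → C → Bool :=
  fun c c' => decide (cost c < cost c') || (decide (cost c = cost c') && prec0 c c')

end PB

/-! Statement 15: the W[1]-hardness reduction for GreedyAV with cheaper-first
tie-breaking and `6k + 1` voters (Theorem `greedy-av-pb-voters-xp`). -/

/-- The projects: `x_1, …, x_n`, `y_1, …, y_{2k+1}`, `d_1, …, d_{k+1}`, `p`. -/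
abbrev Proj (n k : ℕ) := (Fin n ⊕ Fin (2 * k + 1)) ⊕ (Fin (k + 1) ⊕ Unit)

/-- The preferred project `p`. -/
def pProj (n k : ℕ) : Proj n k := Sum.inr (Sum.inr ())

/-- The costs: `cost(x_i) = T + u_i`, `cost(y_j) = T`, `cost(d_j) = T - t + 1`,
`cost(p) = T - t`, where `T = 3·(u_1 + … + u_n)`. -/
def cost0 {n : ℕ} (u : Fin n → ℕ) (t k : ℕ) : Proj n k → ℕ
  | .inl (.inl i) => 3 * (∑ j, u j) + u i
  | .inl (.inr _) => 3 * (∑ j, u j)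
  | .inr (.inl _) => 3 * (∑ j, u j) - t + 1
  | .inr (.inr _) => 3 * (∑ j, u j) - t

open Finset

namespace List

variable {α : Type*} {f : α → ℕ} {l : List α}

theorem Pairwise.filter_lt_append_filter_le (h : l.Pairwise fun a b => f a ≤ f b) (m : ℕ) :
    l.filter (f · < m) ++ l.filter (m ≤ f ·) = l := by
  induction l with
  | nil => rfl
  | cons a l ih =>
    obtain ⟨ha, hl⟩ := pairwise_cons.1 h
    by_cases hm : f a < m
    · simp [hm, ih hl]
    · have hle : ∀ b ∈ l, m ≤ f b := fun b hb => (not_lt.1 hm).trans (ha b hb)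
      have hlt : l.filter (f · < m) = [] := filter_eq_nil_iff.2 fun b hb => by simpa using hle b hb
      have hge : l.filter (m ≤ f ·) = l := filter_eq_self.2 fun b hb => by simpa using hle b hb
      simp [hm, not_lt.1 hm, hlt, hge]

theorem Pairwise.flatMap_range_filter_eq (h : l.Pairwise fun a b => f a ≤ f b) :
    ∀ m, (range m).flatMap (fun j => l.filter (f · = j)) = l.filter (f · < m)
  | 0 => by simp
  | m + 1 => by
    rw [range_succ, flatMap_append, flatMap_singleton, h.flatMap_range_filter_eq m]
    conv_rhs => rw [← (h.filter (f · < m + 1)).filter_lt_append_filter_le m, filter_filter,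
      filter_filter]
    congr 1 <;> apply filter_congr <;> intro a _ <;>
      rw [Bool.eq_iff_iff] <;> simp only [Bool.and_eq_true, decide_eq_true_eq] <;> omega

end List

namespace PB

theorem isStrictTotalOrder_cheaperFirst {C : Type} (cost : C → ℕ) {prec0 : C → C → Bool}
    (h : IsStrictTotalOrder C fun a b => prec0 a b = true) :
    IsStrictTotalOrder C fun a b => cheaperFirst cost prec0 a b = true := by
  refine @IsStrictTotalOrder.mk _ _ ⟨fun a b hab hba => ?_⟩
    { irrefl := fun a => ?_, trans := fun a b c hab hbc => ?_ } <;>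
    simp only [cheaperFirst, Bool.or_eq_true, Bool.and_eq_true, decide_eq_true_eq] at *
  · exact h.trichotomous a b (fun h' => hab (Or.inr ⟨by omega, h'⟩))
      (fun h' => hba (Or.inr ⟨by omega, h'⟩))
  · exact fun ha => ha.elim (lt_irrefl _) fun ha => h.irrefl a ha.2
  · rcases hab with hab | ⟨hab, hab'⟩ <;> rcases hbc with hbc | ⟨hbc, hbc'⟩
    · exact Or.inl (by omega)
    · exact Or.inl (by omega)
    · exact Or.inl (by omega)
    · exact Or.inr ⟨by omega, h.trans _ _ _ hab' hbc'⟩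

theorem card_flippers_add_card_flippers_le {C V : Type} [Fintype V] [DecidableEq C]
    [DecidableEq V] (F : Finset (V × C)) {a b : C} (hab : a ≠ b) :
    #{v | (v, a) ∈ F} + #{v | (v, b) ∈ F} ≤ #F := by
  have inj : ∀ (c : C) (s : Set V), Set.InjOn (fun v => (v, c)) s :=
    fun _ _ _ _ _ _ => congrArg Prod.fst
  rw [← card_filter_add_card_filter_not (s := F) (fun q => q.2 = a)]
  gcongr
  · exact card_le_card_of_injOn _ (fun v hv => by simp_all) (inj a _)
  · exact card_le_card_of_injOn _ (fun v hv => by simp_all [Ne.symm hab]) (inj b _)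

section Greedy

variable {C : Type} [DecidableEq C]

def greedyStep (budget : ℕ) (cost : C → ℕ) (W : Finset C) (c : C) : Finset C :=
  if (∑ x ∈ W, cost x) + cost c ≤ budget then insert c W else W

variable {B : ℕ} {cost : C → ℕ} {W : Finset C} {c : C}

theorem greedyStep_of_le (h : ∑ x ∈ W, cost x + cost c ≤ B) :
    greedyStep B cost W c = insert c W :=
  if_pos h

theorem greedyStep_of_lt (h : B < ∑ x ∈ W, cost x + cost c) : greedyStep B cost W c = W :=
  if_neg (not_le.2 h)

theorem foldl_greedyStep_of_forall_lt {l : List C}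
    (h : ∀ c ∈ l, B < ∑ x ∈ W, cost x + cost c) : l.foldl (greedyStep B cost) W = W := by
  induction l with
  | nil => rfl
  | cons a l ih =>
    rw [List.foldl_cons, greedyStep_of_lt (h a (by simp)), ih fun c hc => h c (by simp [hc])]

/-- Once the remaining budget is `T - σ` with `σ > 0`, projects of cost `T` are skipped, one
project of cost `T - t + 1` fits exactly when `σ < t` and then leaves no room for `p`, and
otherwise `p` of cost `T - t` fits exactly when `σ ≤ t`. -/
theorem mem_foldl_greedyStep_tail_iff {T t σ : ℕ} {p : C} {Ly Ld : List C}
    (hW : ∑ x ∈ W, cost x + T = B + σ) (hσ : 0 < σ) (ht : 2 * t ≤ T)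
    (hy : ∀ c ∈ Ly, cost c = T) (hd : ∀ c ∈ Ld, cost c = T - t + 1)
    (hdW : ∀ c ∈ Ld, c ∉ W) (hLd : Ld ≠ []) (hp : cost p = T - t) (hpW : p ∉ W) :
    p ∈ (Ly ++ Ld ++ [p]).foldl (greedyStep B cost) W ↔ σ = t := by
  rw [List.foldl_append, List.foldl_append,
    foldl_greedyStep_of_forall_lt (l := Ly) fun c hc => by rw [hy c hc]; omega,
    List.foldl_cons, List.foldl_nil]
  rcases le_or_gt t σ with htσ | hσt
  · rw [foldl_greedyStep_of_forall_lt (l := Ld) fun c hc => by rw [hd c hc]; omega]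
    by_cases hσt : σ = t
    · rw [greedyStep_of_le (W := W) (by omega)]
      simpa using hσt
    · rw [greedyStep_of_lt (W := W) (by omega)]
      simpa [hpW] using hσt
  · obtain ⟨d, Ld, rfl⟩ := List.exists_cons_of_ne_nil hLd
    have hdc := hd d (by simp)
    have hWd : ∑ x ∈ insert d W, cost x = ∑ x ∈ W, cost x + cost d :=
      (sum_insert (hdW d (by simp))).trans (add_comm _ _)
    rw [List.foldl_cons, greedyStep_of_le (W := W) (by omega),
      foldl_greedyStep_of_forall_lt fun c hc => by rw [hWd, hd c (by simp [hc])]; omega,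
      greedyStep_of_lt (W := insert d W) (by omega)]
    have hdp : d ≠ p := by rintro rfl; omega
    simpa [hpW, Ne.symm hdp] using hσt.ne

end Greedy

variable {C V : Type} [Fintype C] [DecidableEq C] [Fintype V] [DecidableEq V]

theorem mem_flip_A_iff (E : PB C V) (F : Finset (V × C)) (v : V) (c : C) :
    c ∈ (E.flip F).A v ↔ (c ∈ E.A v ∧ (v, c) ∉ F) ∨ ((v, c) ∈ F ∧ c ∉ E.A v) := by
  have : c ∈ (F.filter fun q => q.1 = v).image Prod.snd ↔ (v, c) ∈ F := by
    simp
  simp only [flip, mem_symmDiff, this]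

theorem score_le_flip_score_add (E : PB C V) (F : Finset (V × C)) (c : C) :
    E.score c ≤ (E.flip F).score c + #{v | (v, c) ∈ F} := by
  refine (card_le_card fun v hv => ?_).trans (card_union_le _ _)
  by_cases hF : (v, c) ∈ F <;> simp_all [mem_flip_A_iff]

theorem flip_score_le_score_add (E : PB C V) (F : Finset (V × C)) (c : C) :
    (E.flip F).score c ≤ E.score c + #{v | (v, c) ∈ F} := by
  refine (card_le_card fun v hv => ?_).trans (card_union_le _ _)
  simp only [mem_filter, mem_univ, true_and, mem_flip_A_iff] at hv
  rcases hv with ⟨h, -⟩ | ⟨h, -⟩ <;> simp [h]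

theorem flip_score_lt_flip_score (E : PB C V) (F : Finset (V × C)) {a b : C} (hab : a ≠ b)
    (h : E.score b + #F < E.score a) : (E.flip F).score b < (E.flip F).score a := by
  have := score_le_flip_score_add E F a
  have := flip_score_le_score_add E F b
  have := card_flippers_add_card_flippers_le F hab
  omega

theorem score_flip_image (E : PB C V) (P : Finset C) (w : C → V)
    (hw : ∀ c ∈ P, c ∉ E.A (w c)) (c : C) :
    (E.flip (P.image fun c => (w c, c))).score c = E.score c + if c ∈ P then 1 else 0 := by
  have hF : ∀ v, (v, c) ∈ P.image (fun c => (w c, c)) ↔ c ∈ P ∧ w c = v := by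
    simp [and_comm]
  by_cases hc : c ∈ P
  · have : (E.flip (P.image fun c => (w c, c))).score c =
        #(insert (w c) ({v | c ∈ E.A v} : Finset V)) := by
      unfold score
      congr 1
      ext v
      by_cases hv : w c = v
      · subst hv
        simp [mem_flip_A_iff, hF, hc, hw c hc]
      · simp [mem_flip_A_iff, hF, hv, Ne.symm hv]
    rw [this, card_insert_of_notMem (by simp [hw c hc])]
    simp [score, hc]
  · simp [score, mem_flip_A_iff, hF, hc]

theorem exists_not_mem_A (E : PB C V) {c : C} (h : E.score c < Fintype.card V) :
    ∃ v, c ∉ E.A v := by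
  by_contra! hA
  simp [score, hA] at h


theorem greedyAV_eq_foldl (E : PB C V) (prec : C → C → Bool) :
    E.greedyAV prec = (E.consOrderAV prec).foldl (greedyStep E.budget E.cost) ∅ :=
  rfl

theorem nodup_consOrderAV (E : PB C V) (prec : C → C → Bool) : (E.consOrderAV prec).Nodup :=
  (List.mergeSort_perm _ _).nodup_iff.2 (nodup_toList _)

theorem mem_consOrderAV (E : PB C V) (prec : C → C → Bool) (c : C) : c ∈ E.consOrderAV prec :=
  (List.mergeSort_perm _ _).mem_iff.2 (mem_toList.2 (mem_univ c))

theorem pairwise_score_consOrderAV (E : PB C V) {prec : C → C → Bool}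
    (h : IsStrictTotalOrder C fun a b => prec a b = true) :
    (E.consOrderAV prec).Pairwise fun c c' => E.score c' ≤ E.score c := by
  refine (List.pairwise_mergeSort (fun a b c hab hbc => ?_) (fun a b => ?_) _).imp fun hab => ?_
  · simp only [Bool.or_eq_true, Bool.and_eq_true, decide_eq_true_eq] at hab hbc ⊢
    rcases hab with hab | ⟨hab, hab'⟩ <;> rcases hbc with hbc | ⟨hbc, hbc'⟩
    · exact Or.inl (by omega)
    · exact Or.inl (by omega)
    · exact Or.inl (by omega)
    · refine Or.inr ⟨by omega, ?_⟩
      rcases hab' with hab' | rfl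
      · rcases hbc' with hbc' | rfl
        · exact Or.inl (h.trans _ _ _ hab' hbc')
        · exact Or.inl hab'
      · exact hbc'
  · simp only [Bool.or_eq_true, Bool.and_eq_true, decide_eq_true_eq]
    rcases lt_trichotomy (E.score a) (E.score b) with hs | hs | hs
    · exact Or.inr (Or.inl hs)
    · by_cases hprec : prec a b = true
      · exact Or.inl (Or.inr ⟨hs, Or.inl hprec⟩)
      · by_cases hprec' : prec b a = true
        · exact Or.inr (Or.inr ⟨hs.symm, Or.inl hprec'⟩)
        · exact Or.inl (Or.inr ⟨hs, Or.inr (h.trichotomous a b hprec hprec')⟩)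
    · exact Or.inl (Or.inl hs)
  · simp only [Bool.or_eq_true, Bool.and_eq_true, decide_eq_true_eq] at hab
    omega

theorem pairwise_rank_consOrderAV (E : PB C V) {prec : C → C → Bool}
    (h : IsStrictTotalOrder C fun a b => prec a b = true) (rank : C → ℕ)
    (hrank : ∀ a b, rank a < rank b → E.score b < E.score a) :
    (E.consOrderAV prec).Pairwise fun a b => rank a ≤ rank b :=
  (pairwise_score_consOrderAV E h).imp fun {a b} hab =>
    not_lt.1 fun hlt => (hrank b a hlt).not_ge hab

end PB

open PB

section Reduction

variable {n k t : ℕ} {u : Fin n → ℕ}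

def xProj {n : ℕ} (k : ℕ) (i : Fin n) : Proj n k := .inl (.inl i)

theorem xProj_injective : Function.Injective (xProj (n := n) k) :=
  fun _ _ h => by simpa [xProj] using h

def classScore {n : ℕ} (k : ℕ) : Proj n k → ℕ
  | .inl (.inl _) => 6 * k
  | .inl (.inr _) => 4 * k
  | .inr (.inl _) => 2 * k
  | .inr (.inr _) => 0

/-- The block of a project in the GreedyAV order after the approval of each `x_i` with `i ∈ S`
has been raised by one. -/
def blockIndex (S : Finset (Fin n)) : Proj n k → ℕ
  | .inl (.inl i) => if i ∈ S then 0 else 1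
  | .inl (.inr _) => 2
  | .inr (.inl _) => 3
  | .inr (.inr _) => 4

theorem classScore_add_le_of_blockIndex_lt {a b : Proj n k}
    (h : blockIndex ∅ a < blockIndex ∅ b) : classScore k b + 2 * k ≤ classScore k a := by
  rcases a with (i | j) | (j | ⟨⟩) <;> rcases b with (i' | j') | (j' | ⟨⟩) <;>
    simp [blockIndex, classScore] at h ⊢ <;> omega

theorem mem_image_xProj_iff {S : Finset (Fin n)} {c : Proj n k} :
    c ∈ S.image (xProj k) ↔ blockIndex S c = 0 := by
  rcases c with (i | j) | (j | ⟨⟩) <;> simp [xProj, blockIndex]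

theorem classScore_add_indicator_lt (hk : 1 ≤ k) (S : Finset (Fin n)) {a b : Proj n k}
    (h : blockIndex S a < blockIndex S b) :
    classScore k b + (if blockIndex S b = 0 then 1 else 0) <
      classScore k a + (if blockIndex S a = 0 then 1 else 0) := by
  rcases a with (i | j) | (j | ⟨⟩) <;> rcases b with (i' | j') | (j' | ⟨⟩) <;>
    simp only [blockIndex, classScore] at h ⊢ <;> split_ifs at h ⊢ <;> simp_all <;> omega

theorem sum_cost0_image_xProj (S : Finset (Fin n)) :
    ∑ c ∈ S.image (xProj k), cost0 u t k c = #S * (3 * ∑ j, u j) + ∑ i ∈ S, u i := by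
  rw [sum_image fun _ _ _ _ h => xProj_injective h]
  simp [xProj, cost0, sum_add_distrib, mul_comm]

theorem greedyStep_image_xProj_of_card_lt {S : Finset (Fin n)} {i : Fin n} (hS : #S < k)
    (hi : i ∉ S) :
    greedyStep ((k + 1) * (3 * ∑ j, u j)) (cost0 u t k) (S.image (xProj k)) (xProj k i) =
      (insert i S).image (xProj k) := by
  have hσ : ∑ j ∈ S, u j + u i ≤ ∑ j, u j := by
    rw [add_comm, ← sum_insert hi]
    exact sum_le_sum_of_subset (subset_univ _)
  have hcard : (#S + 1) * (3 * ∑ j, u j) ≤ k * (3 * ∑ j, u j) := Nat.mul_le_mul_right _ hS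
  rw [add_one_mul] at hcard
  rw [image_insert]
  refine greedyStep_of_le ?_
  rw [sum_cost0_image_xProj, add_one_mul]
  simp only [xProj, cost0]
  omega

theorem greedyStep_image_xProj_of_card_eq (hu : ∀ i, 0 < u i) {S : Finset (Fin n)} (hS : #S = k)
    (i : Fin n) :
    greedyStep ((k + 1) * (3 * ∑ j, u j)) (cost0 u t k) (S.image (xProj k)) (xProj k i) =
      S.image (xProj k) := by
  have := hu i
  refine greedyStep_of_lt ?_
  rw [sum_cost0_image_xProj, hS, add_one_mul]
  simp only [xProj, cost0]
  omega

theorem foldl_greedyStep_xProj (hu : ∀ i, 0 < u i) {l : List (Proj n k)}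
    (hl : ∀ c ∈ l, ∃ i, c = xProj k i) (hnd : l.Nodup) {S₀ : Finset (Fin n)}
    (hS₀ : ∀ i ∈ S₀, xProj k i ∉ l) (hk : #S₀ ≤ k) :
    ∃ S, l.foldl (greedyStep ((k + 1) * (3 * ∑ j, u j)) (cost0 u t k)) (S₀.image (xProj k)) =
        S.image (xProj k) ∧ S₀ ⊆ S ∧
      S ⊆ S₀ ∪ ({i | xProj k i ∈ l.toFinset} : Finset (Fin n)) ∧
      #S = min k (#S₀ + #{i | xProj k i ∈ l.toFinset}) := by
  induction l generalizing S₀ with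
  | nil => exact ⟨S₀, rfl, subset_rfl, subset_union_left, by simpa using hk⟩
  | cons c l ih =>
    obtain ⟨i, rfl⟩ := hl c (by simp)
    obtain ⟨hil, hnd⟩ := List.nodup_cons.1 hnd
    have hl : ∀ c ∈ l, ∃ i, c = xProj k i := fun c hc => hl c (by simp [hc])
    have hi : i ∉ S₀ := fun h => hS₀ i h (by simp)
    have hil' : i ∉ ({j | xProj k j ∈ l.toFinset} : Finset (Fin n)) := by simpa using hil
    have hset : ({j | xProj k j ∈ (xProj k i :: l).toFinset} : Finset (Fin n)) =
        insert i ({j | xProj k j ∈ l.toFinset} : Finset (Fin n)) := by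
      ext j
      simp [xProj_injective.eq_iff]
    rw [List.foldl_cons, hset, card_insert_of_notMem hil']
    rcases hk.lt_or_eq with hlt | heq
    · obtain ⟨S, hfold, h₁, h₂, h₃⟩ := ih hl hnd (S₀ := insert i S₀)
        (fun j hj => (mem_insert.1 hj).elim (fun h => h ▸ hil)
          fun hj h => hS₀ j hj (List.mem_cons_of_mem _ h))
        (by rw [card_insert_of_notMem hi]; omega)
      rw [greedyStep_image_xProj_of_card_lt hlt hi]
      refine ⟨S, hfold, (subset_insert _ _).trans h₁, h₂.trans ?_, ?_⟩
      · intro j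
        simp only [mem_union, mem_insert]
        tauto
      · rw [h₃, card_insert_of_notMem hi]
        omega
    · obtain ⟨S, hfold, h₁, h₂, h₃⟩ :=
        ih hl hnd (fun j hj h => hS₀ j hj (by simp [h])) hk
      rw [greedyStep_image_xProj_of_card_eq hu heq]
      exact ⟨S, hfold, h₁, h₂.trans (union_subset_union subset_rfl (subset_insert _ _)),
        by omega⟩

theorem eq_blocks_of_pairwise_blockIndex {S : Finset (Fin n)} {L : List (Proj n k)}
    (hnd : L.Nodup) (hL : ∀ c, c ∈ L)
    (hsorted : L.Pairwise fun a b => blockIndex S a ≤ blockIndex S b) :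
    L = L.filter (blockIndex S · = 0) ++ L.filter (blockIndex S · = 1) ++
      (L.filter (blockIndex S · = 2) ++ L.filter (blockIndex S · = 3) ++ [pProj n k]) := by
  have hlt : ∀ c : Proj n k, blockIndex S c < 5 := by
    rintro ((i | j) | (j | ⟨⟩)) <;> simp only [blockIndex] <;> try split_ifs
    all_goals omega
  have hp : L.filter (blockIndex S · = 4) = [pProj n k] := by
    have h4 : ∀ c : Proj n k, blockIndex S c = 4 ↔ c = pProj n k := by
      rintro ((i | j) | (j | ⟨⟩)) <;> simp only [blockIndex, pProj] <;> try split_ifs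
      all_goals simp
    by_contra hne
    rcases ((hnd.filter _).ne_singleton_iff _).1 hne with hnil | ⟨c, hc, hcp⟩
    · have hpmem : pProj n k ∈ L.filter (blockIndex S · = 4) :=
        List.mem_filter.2 ⟨hL _, decide_eq_true rfl⟩
      simp [hnil] at hpmem
    · exact hcp ((h4 c).1 (by simpa using (List.mem_filter.1 hc).2))
  have hall : L.filter (blockIndex S · < 5) = L :=
    List.filter_eq_self.2 fun c _ => by simpa using hlt c
  rw [← hsorted.flatMap_range_filter_eq 5] at hall
  conv_lhs => rw [← hall]
  simp [List.range_succ, ← hp]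

theorem mem_filter_blockIndex_iff {S : Finset (Fin n)} {L : List (Proj n k)} (hL : ∀ c, c ∈ L)
    {c : Proj n k} {j : ℕ} : c ∈ L.filter (blockIndex S · = j) ↔ blockIndex S c = j := by
  simp [hL]

theorem exists_foldl_greedyStep_xBlocks (hu : ∀ i, 0 < u i) (hkn : k ≤ n)
    {S : Finset (Fin n)} (hS : #S ≤ k) {L : List (Proj n k)} (hnd : L.Nodup)
    (hL : ∀ c, c ∈ L) :
    ∃ S', S ⊆ S' ∧ #S' = k ∧
      (L.filter (blockIndex S · = 0) ++ L.filter (blockIndex S · = 1)).foldl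
        (greedyStep ((k + 1) * (3 * ∑ j, u j)) (cost0 u t k)) ∅ = S'.image (xProj k) := by
  have hx : ∀ j ≤ 1, ∀ c ∈ L.filter (blockIndex S · = j), ∃ i, c = xProj k i := by
    rintro j hj ((i | c) | (c | ⟨⟩)) hc <;>
      rw [mem_filter_blockIndex_iff hL] at hc <;> simp only [blockIndex] at hc
    exacts [⟨i, rfl⟩, by omega, by omega, by omega]
  obtain ⟨S₁, hfold₁, -, hS₁, hcard₁⟩ := foldl_greedyStep_xProj (t := t) hu
    (hx 0 zero_le_one) (hnd.filter _) (S₀ := ∅) (by simp) (by simp)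
  have hxS : ({i | xProj k i ∈ (L.filter (blockIndex S · = 0)).toFinset} : Finset _) = S := by
    ext i
    simp [hL, blockIndex, xProj]
  rw [hxS, empty_union] at hS₁
  rw [hxS, card_empty, zero_add, min_eq_right hS] at hcard₁
  obtain rfl : S = S₁ := (eq_of_subset_of_card_le hS₁ hcard₁.ge).symm
  obtain ⟨S₂, hfold₂, hSS₂, -, hcard₂⟩ := foldl_greedyStep_xProj (t := t) hu
    (hx 1 le_rfl) (hnd.filter _) (fun i hi => by simp [hL, blockIndex, xProj, hi]) hS
  have hxSc :
      ({i | xProj k i ∈ (L.filter (blockIndex S · = 1)).toFinset} : Finset _) = Sᶜ := by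
    ext i
    simp [hL, blockIndex, xProj]
  rw [hxSc, card_add_card_compl, Fintype.card_fin, min_eq_left hkn] at hcard₂
  rw [image_empty] at hfold₁
  exact ⟨S₂, hSS₂, hcard₂, by rw [List.foldl_append, hfold₁, hfold₂]⟩

theorem exists_mem_foldl_greedyStep_iff (hu : ∀ i, 0 < u i) (hk : 1 ≤ k) (hkn : k ≤ n)
    (htsum : t ≤ ∑ i, u i) {S : Finset (Fin n)} (hS : #S ≤ k) {L : List (Proj n k)}
    (hnd : L.Nodup) (hL : ∀ c, c ∈ L)
    (hsorted : L.Pairwise fun a b => blockIndex S a ≤ blockIndex S b) :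
    ∃ S', S ⊆ S' ∧ #S' = k ∧
      (pProj n k ∈ L.foldl (greedyStep ((k + 1) * (3 * ∑ j, u j)) (cost0 u t k)) ∅ ↔
        ∑ i ∈ S', u i = t) := by
  obtain ⟨S', hSS', hcard, hfold⟩ := exists_foldl_greedyStep_xBlocks (t := t) hu hkn hS hnd hL
  refine ⟨S', hSS', hcard, ?_⟩
  rw [eq_blocks_of_pairwise_blockIndex hnd hL hsorted, List.foldl_append, hfold]
  have hd₀ : (.inr (.inl 0) : Proj n k) ∈ L.filter (blockIndex S · = 3) :=
    (mem_filter_blockIndex_iff hL).2 rfl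
  refine mem_foldl_greedyStep_tail_iff (T := 3 * ∑ j, u j) ?_
    (sum_pos (fun i _ => hu i) (card_pos.1 (by omega))) (by omega) ?_ ?_ ?_
    (List.ne_nil_of_mem hd₀) rfl (by simp [pProj, xProj])
  · rw [sum_cost0_image_xProj, hcard, add_one_mul]
    ring
  all_goals rintro ((i | c) | (c | ⟨⟩)) hc <;>
    rw [mem_filter_blockIndex_iff hL] at hc <;> simp only [blockIndex] at hc
  all_goals try split_ifs at hc
  all_goals first | exact absurd hc (by decide) | rfl | simp [xProj]

variable {V : Type} [Fintype V] [DecidableEq V]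

theorem exists_pProj_mem_greedyAV_iff (hu : ∀ i, 0 < u i) (hk : 1 ≤ k) (hkn : k ≤ n)
    (htsum : t ≤ ∑ i, u i)
    (E : PB (Proj n k) V) (hB : E.budget = (k + 1) * (3 * ∑ i, u i)) (hC : E.cost = cost0 u t k)
    {prec : Proj n k → Proj n k → Bool}
    (hprec : IsStrictTotalOrder (Proj n k) fun a b => prec a b = true)
    {S : Finset (Fin n)} (hS : #S ≤ k)
    (hsep : ∀ a b, blockIndex S a < blockIndex S b → E.score b < E.score a) :
    ∃ S', S ⊆ S' ∧ #S' = k ∧ (pProj n k ∈ E.greedyAV prec ↔ ∑ i ∈ S', u i = t) := by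
  rw [greedyAV_eq_foldl, hB, hC]
  exact exists_mem_foldl_greedyStep_iff hu hk hkn htsum hS (nodup_consOrderAV E prec)
    (mem_consOrderAV E prec) (pairwise_rank_consOrderAV E hprec _ hsep)

theorem flip_score_lt_of_blockIndex_lt (E : PB (Proj n k) V)
    (hscore : ∀ c, E.score c = classScore k c) (hk : 1 ≤ k) {F : Finset (V × Proj n k)}
    (hF : #F ≤ k) {a b : Proj n k} (h : blockIndex ∅ a < blockIndex ∅ b) :
    (E.flip F).score b < (E.flip F).score a := by
  refine flip_score_lt_flip_score E F (fun hab => h.ne (congrArg _ hab)) ?_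
  have := classScore_add_le_of_blockIndex_lt h
  rw [hscore, hscore]
  omega

theorem exists_flip_score_lt_of_blockIndex_lt (E : PB (Proj n k) V)
    (hscore : ∀ c, E.score c = classScore k c) (hV : 6 * k < Fintype.card V) (hk : 1 ≤ k)
    (S : Finset (Fin n)) :
    ∃ F : Finset (V × Proj n k), #F ≤ #S ∧
      ∀ a b, blockIndex S a < blockIndex S b → (E.flip F).score b < (E.flip F).score a := by
  have hlt : ∀ c, E.score c < Fintype.card V := by
    rintro ((i | j) | (j | ⟨⟩)) <;> rw [hscore] <;> simp only [classScore] <;> omega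
  choose w hw using fun c => E.exists_not_mem_A (hlt c)
  refine ⟨(S.image (xProj k)).image fun c => (w c, c), card_image_le.trans card_image_le,
    fun a b h => ?_⟩
  simp only [score_flip_image E _ w (fun c _ => hw c), hscore, mem_image_xProj_iff]
  exact classScore_add_indicator_lt hk S h

end Reduction

theorem stmt15_general (n k t : ℕ) (u : Fin n → ℕ) (hu : ∀ i, 0 < u i)
    (htsum : t ≤ ∑ i, u i) (hk1 : 1 ≤ k) (hkn : k ≤ n)
    (A : Fin (6 * k + 1) → Finset (Proj n k))
    (E : PB (Proj n k) (Fin (6 * k + 1)))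
    (hE : E = { A := A, budget := (k + 1) * (3 * ∑ i, u i), cost := cost0 u t k })
    (hx : ∀ i : Fin n, E.score (Sum.inl (Sum.inl i)) = 6 * k)
    (hy : ∀ j : Fin (2 * k + 1), E.score (Sum.inl (Sum.inr j)) = 4 * k)
    (hd : ∀ j : Fin (k + 1), E.score (Sum.inr (Sum.inl j)) = 2 * k)
    (hp : E.score (pProj n k) = 0)
    (prec0 : Proj n k → Proj n k → Bool)
    (hlin : IsStrictTotalOrder (Proj n k) fun a b => prec0 a b = true) :
    (∃ F : Finset (Fin (6 * k + 1) × Proj n k), F.card ≤ k ∧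
        pProj n k ∈ PB.greedyAV (E.flip F) (PB.cheaperFirst (cost0 u t k) prec0)) ↔
      ∃ S : Finset (Fin n), S.card = k ∧ ∑ i ∈ S, u i = t := by
  have hscore : ∀ c, E.score c = classScore k c := by
    rintro ((i | j) | (j | ⟨⟩))
    exacts [hx i, hy j, hd j, hp]
  have hB : ∀ F, (E.flip F).budget = (k + 1) * (3 * ∑ i, u i) := by subst hE; exact fun _ => rfl
  have hC : ∀ F, (E.flip F).cost = cost0 u t k := by subst hE; exact fun _ => rfl
  have hprec := isStrictTotalOrder_cheaperFirst (cost0 u t k) hlin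
  constructor
  · rintro ⟨F, hF, hpF⟩
    obtain ⟨S, -, hS, hiff⟩ := exists_pProj_mem_greedyAV_iff hu hk1 hkn htsum (E.flip F) (hB F)
      (hC F) hprec (S := ∅) (by simp) fun _ _ => flip_score_lt_of_blockIndex_lt E hscore hk1 hF
    exact ⟨S, hS, hiff.1 hpF⟩
  · rintro ⟨S, hS, hsum⟩
    obtain ⟨F, hF, hsep⟩ := exists_flip_score_lt_of_blockIndex_lt E hscore (by simp) hk1 S
    obtain ⟨S', hSS', hS', hiff⟩ := exists_pProj_mem_greedyAV_iff hu hk1 hkn htsum (E.flip F)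
      (hB F) (hC F) hprec hS.le hsep
    obtain rfl := eq_of_subset_of_card_le hSS' (by omega)
    exact ⟨F, hS ▸ hF, hiff.2 hsum⟩

theorem stmt15 (n k t : ℕ) (u : Fin n → ℕ) (hu : ∀ i, 0 < u i)
    (ht : 0 < t) (htsum : t ≤ ∑ i, u i) (hk1 : 1 ≤ k) (hkn : k ≤ n)
    (A : Fin (6 * k + 1) → Finset (Proj n k))
    (E : PB (Proj n k) (Fin (6 * k + 1)))
    (hE : E = { A := A, budget := (k + 1) * (3 * ∑ i, u i), cost := cost0 u t k })
    (hx : ∀ i : Fin n, E.score (Sum.inl (Sum.inl i)) = 6 * k)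
    (hy : ∀ j : Fin (2 * k + 1), E.score (Sum.inl (Sum.inr j)) = 4 * k)
    (hd : ∀ j : Fin (k + 1), E.score (Sum.inr (Sum.inl j)) = 2 * k)
    (hp : E.score (pProj n k) = 0)
    (prec0 : Proj n k → Proj n k → Bool)
    (hlin : IsStrictTotalOrder (Proj n k) fun a b => prec0 a b = true) :
    (∃ F : Finset (Fin (6 * k + 1) × Proj n k), F.card ≤ k ∧
        pProj n k ∈ PB.greedyAV (E.flip F) (PB.cheaperFirst (cost0 u t k) prec0)) ↔
      ∃ S : Finset (Fin n), S.card = k ∧ ∑ i ∈ S, u i = t :=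
  stmt15_general n k t u hu htsum hk1 hkn A E hE hx hy hd hp prec0 hlin
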